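/- arXiv:2409.13608 — 2 statements merged into one kernel-verified Lean document; each statement's English description precedes it below -/
import Mathlib

section
/- The fixed-point sets of T_W and of T_{β,η} coincide: Fix(T_W) = Fix(T_{β,η}), where T_W := T_G ∘ (I − W⁻¹∇r). -/
noncomputable section

open scoped BigOperators

/-- `ℝ^n` with the Euclidean structure. -/
abbrev Euc (n : ℕ) := EuclideanSpace ℝ (Fin n)

/-- Matrix–vector multiplication, landing in Euclidean space. -/
def mVec {p q : ℕ} (A : Matrix (Fin p) (Fin q) ℝ) (v : Euc q) : Euc p :=
  WithLp.toLp 2 (fun i => ∑ j, A i j * v j)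

/-- The set of proximity points of an extended-real-valued function `ψ` at `x`:
`prox_ψ(x) = argmin_u {½‖u−x‖² + ψ(u)}`. -/
def proxSet {n : ℕ} (ψ : Euc n → EReal) (x : Euc n) : Set (Euc n) :=
  {p | ∀ u : Euc n,
    ((1 / 2 * ‖p - x‖ ^ 2 : ℝ) : EReal) + ψ p ≤ ((1 / 2 * ‖u - x‖ ^ 2 : ℝ) : EReal) + ψ u}

/-- The indicator function `ι_d` of the set `{x | x ≥ d}` (componentwise). -/
def iotaInd {n : ℕ} (d : Euc n) : Euc n → EReal :=
  fun y => if ∀ i, d i ≤ y i then (0 : EReal) else ⊤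

/-- The convex (Fenchel) conjugate `ψ*(x) = sup_u {⟨x,u⟩ − ψ(u)}`. -/
def conjFn {n : ℕ} (ψ : Euc n → EReal) : Euc n → EReal :=
  fun x => ⨆ u : Euc n, (((inner ℝ x u : ℝ) : EReal) - ψ u)


/-- The block operator `W = P⁻¹G = [[(1/β)I, −Dᵀ],[−D, (1/η)I]]` on `ℝ^{m₁} × ℝ^{m₂}`. -/
def Wapp {m₁ m₂ : ℕ} (β η : ℝ) (D : Matrix (Fin m₂) (Fin m₁) ℝ)
    (z : Euc m₁ × Euc m₂) : Euc m₁ × Euc m₂ :=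
  ((1 / β) • z.1 - mVec D.transpose z.2, -(mVec D z.1) + (1 / η) • z.2)

/-- The bilinear form `⟨z, Ww⟩` associated with `W`. -/
def ipW {m₁ m₂ : ℕ} (β η : ℝ) (D : Matrix (Fin m₂) (Fin m₁) ℝ)
    (z w : Euc m₁ × Euc m₂) : ℝ :=
  (inner ℝ z.1 (Wapp β η D w).1 : ℝ) + (inner ℝ z.2 (Wapp β η D w).2 : ℝ)

/-- The `W`-weighted norm `‖z‖_W = ⟨z, Wz⟩^{1/2}`. -/
def normW {m₁ m₂ : ℕ} (β η : ℝ) (D : Matrix (Fin m₂) (Fin m₁) ℝ)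
    (z : Euc m₁ × Euc m₂) : ℝ :=
  Real.sqrt (ipW β η D z z)

/-!
For `z = (v, y)` write `u = W⁻¹(∇f(v), 0)`. The two block rows of `Wu = (∇f(v), 0)` say exactly
that the points at which `T_G` evaluates its two proximal maps at `z - u` are, once the first
component of `T_G(z - u)` is known to be `v`, the points at which `T_{β,η}` evaluates its proximal
maps at `z`. Hence the two fixed-point conditions agree, the converse direction using that the
proximal points of the convex functions `βg` and `η ι_d*` are unique: `½‖· - x‖²` is strongly
convex.
-/

lemma mVec_sub {p q : ℕ} (A : Matrix (Fin p) (Fin q) ℝ) (x y : Euc q) :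
    mVec A (x - y) = mVec A x - mVec A y := by
  ext i
  simp [mVec, mul_sub, Finset.sum_sub_distrib]

section Prox

variable {n : ℕ}

lemma eq_of_mem_proxSet {ψ : Euc n → EReal} {x p q : Euc n}
    (hp : p ∈ proxSet ψ x) (hq : q ∈ proxSet ψ x) {a b : ℝ}
    (hpa : ψ p = a) (hqb : ψ q = b)
    (hmid : ψ ((2⁻¹ : ℝ) • (p + q)) ≤ (((a + b) / 2 : ℝ) : EReal)) : p = q := by
  set m : Euc n := (2⁻¹ : ℝ) • (p + q)
  have hqp : 1 / 2 * ‖q - x‖ ^ 2 + b ≤ 1 / 2 * ‖p - x‖ ^ 2 + a := by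
    have := hq p
    rwa [hpa, hqb, ← EReal.coe_add, ← EReal.coe_add, EReal.coe_le_coe_iff] at this
  have hpm : 1 / 2 * ‖p - x‖ ^ 2 + a ≤ 1 / 2 * ‖m - x‖ ^ 2 + (a + b) / 2 := by
    have := (hp m).trans (add_le_add_right hmid _)
    rwa [hpa, ← EReal.coe_add, ← EReal.coe_add, EReal.coe_le_coe_iff] at this
  have hm : ‖m - x‖ = 2⁻¹ * ‖(p - x) + (q - x)‖ := by
    rw [show m - x = (2⁻¹ : ℝ) • ((p - x) + (q - x)) by module, norm_smul]
    norm_num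
  -- `½‖m - x‖² = ¼‖p - x‖² + ¼‖q - x‖² - ⅛‖p - q‖²`, so `p` beats `m` only if `p = q`
  have hpar := parallelogram_law_with_norm ℝ (p - x) (q - x)
  rw [sub_sub_sub_cancel_right] at hpar
  rw [hm] at hpm
  have : ‖p - q‖ ^ 2 = 0 := le_antisymm (by nlinarith) (sq_nonneg _)
  simpa [sub_eq_zero] using this

lemma proxSet_coe_subsingleton {φ : Euc n → ℝ} (hφ : ConvexOn ℝ Set.univ φ) (x : Euc n) :
    (proxSet (fun u => (φ u : EReal)) x).Subsingleton := by
  intro p hp q hq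
  refine eq_of_mem_proxSet hp hq rfl rfl ?_
  have := hφ.2 (Set.mem_univ p) (Set.mem_univ q) (by norm_num : (0 : ℝ) ≤ 2⁻¹)
    (by norm_num : (0 : ℝ) ≤ 2⁻¹) (by norm_num)
  rw [smul_add, EReal.coe_le_coe_iff]
  simp only [smul_eq_mul] at this
  linarith

end Prox

section Conjugate

variable {n : ℕ} (d : Euc n)

lemma inner_le_conjFn_iotaInd (x : Euc n) :
    ((inner ℝ x d : ℝ) : EReal) ≤ conjFn (iotaInd d) x := by
  simpa [iotaInd, conjFn] using
    le_iSup (fun u : Euc n => (((inner ℝ x u : ℝ) : EReal) - iotaInd d u)) d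

lemma conjFn_iotaInd_zero : conjFn (iotaInd d) 0 = 0 := by
  refine le_antisymm (iSup_le fun u => ?_) (by simpa using inner_le_conjFn_iotaInd d 0)
  by_cases h : ∀ i, d i ≤ u i <;> simp [iotaInd, h]

lemma inner_le_of_conjFn_iotaInd_le {x u : Euc n} {c : ℝ} (hu : ∀ i, d i ≤ u i)
    (hc : conjFn (iotaInd d) x ≤ c) : inner ℝ x u ≤ c := by
  have := (le_iSup (fun u : Euc n => (((inner ℝ x u : ℝ) : EReal) - iotaInd d u)) u).trans hc
  simp only [iotaInd, if_pos hu, sub_zero] at this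
  exact_mod_cast this

lemma conjFn_iotaInd_midpoint_le {p q : Euc n} {a b : ℝ}
    (hp : conjFn (iotaInd d) p ≤ a) (hq : conjFn (iotaInd d) q ≤ b) :
    conjFn (iotaInd d) ((2⁻¹ : ℝ) • (p + q)) ≤ (((a + b) / 2 : ℝ) : EReal) := by
  refine iSup_le fun u => ?_
  by_cases hu : ∀ i, d i ≤ u i
  · have hpu := inner_le_of_conjFn_iotaInd_le d hu hp
    have hqu := inner_le_of_conjFn_iotaInd_le d hu hq
    simp only [iotaInd, if_pos hu, sub_zero, EReal.coe_le_coe_iff, real_inner_smul_left,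
      inner_add_left]
    linarith
  · simp [iotaInd, hu, EReal.sub_top]

/-- Comparing with the candidate `0`, where `ι_d*` vanishes, shows that `ι_d*` is finite at every
proximal point of `η ι_d*`. -/
lemma exists_conjFn_iotaInd_eq_coe_of_mem_proxSet {η : ℝ} (hη : 0 < η) {x r : Euc n}
    (hr : r ∈ proxSet (fun u => (η : EReal) * conjFn (iotaInd d) u) x) :
    ∃ c : ℝ, conjFn (iotaInd d) r = c := by
  have hne_top : conjFn (iotaInd d) r ≠ ⊤ := by
    intro htop
    have h0 := hr 0
    simp only [htop, conjFn_iotaInd_zero, mul_zero, EReal.coe_mul_top_of_pos hη,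
      EReal.coe_add_top, add_zero, top_le_iff] at h0
    exact EReal.coe_ne_top _ h0
  have hne_bot : conjFn (iotaInd d) r ≠ ⊥ :=
    fun h => by simpa [h] using inner_le_conjFn_iotaInd d r
  exact ⟨_, (EReal.coe_toReal hne_top hne_bot).symm⟩

lemma proxSet_mul_conjFn_iotaInd_subsingleton {η : ℝ} (hη : 0 < η) (x : Euc n) :
    (proxSet (fun u => (η : EReal) * conjFn (iotaInd d) u) x).Subsingleton := by
  intro p hp q hq
  obtain ⟨a, ha⟩ := exists_conjFn_iotaInd_eq_coe_of_mem_proxSet d hη hp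
  obtain ⟨b, hb⟩ := exists_conjFn_iotaInd_eq_coe_of_mem_proxSet d hη hq
  refine eq_of_mem_proxSet hp hq (a := η * a) (b := η * b)
    (by rw [ha, EReal.coe_mul]) (by rw [hb, EReal.coe_mul]) ?_
  have := mul_le_mul_of_nonneg_left (conjFn_iotaInd_midpoint_le d ha.le hb.le)
    (EReal.coe_nonneg.mpr hη.le)
  rwa [← EReal.coe_mul, show η * ((a + b) / 2) = (η * a + η * b) / 2 by ring] at this

end Conjugate

section WInverse

variable {m₁ m₂ : ℕ} {β η : ℝ} {D : Matrix (Fin m₂) (Fin m₁) ℝ} {u : Euc m₁ × Euc m₂}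
  {v : Euc m₁}

lemma fst_eq_of_Wapp_eq (hβ : β ≠ 0) (hu : Wapp β η D u = (v, 0)) :
    u.1 = β • (v + mVec D.transpose u.2) := by
  have h : (1 / β) • u.1 - mVec D.transpose u.2 = v := congrArg Prod.fst hu
  rw [← h, sub_add_cancel, smul_smul, mul_one_div_cancel hβ, one_smul]

lemma snd_eq_of_Wapp_eq (hη : η ≠ 0) (hu : Wapp β η D u = (v, 0)) :
    u.2 = η • mVec D u.1 := by
  have h : mVec D u.1 = (1 / η) • u.2 := neg_add_eq_zero.mp (congrArg Prod.snd hu)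
  rw [h, smul_smul, mul_one_div_cancel hη, one_smul]

lemma primal_arg_sub_of_Wapp_eq (hβ : β ≠ 0) (hu : Wapp β η D u = (v, 0))
    (z : Euc m₁ × Euc m₂) :
    (z - u).1 - β • mVec D.transpose (z - u).2 = z.1 - β • (v + mVec D.transpose z.2) := by
  rw [Prod.fst_sub, Prod.snd_sub, mVec_sub, fst_eq_of_Wapp_eq hβ hu]
  module

lemma dual_arg_sub_of_Wapp_eq (hη : η ≠ 0) (hu : Wapp β η D u = (v, 0))
    (z : Euc m₁ × Euc m₂) :
    (2 * η) • mVec D z.1 - η • mVec D (z - u).1 + (z - u).2 = z.2 + η • mVec D z.1 := by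
  rw [Prod.fst_sub, Prod.snd_sub, mVec_sub, snd_eq_of_Wapp_eq hη hu]
  module

end WInverse

theorem stmt3_general {m₁ m₂ : ℕ} (D : Matrix (Fin m₂) (Fin m₁) ℝ) (d : Euc m₂)
    (f g : Euc m₁ → ℝ)
    (hgconv : ConvexOn ℝ Set.univ g)
    (β η : ℝ) (hβ : 0 < β) (hη : 0 < η)
    (TG : Euc m₁ × Euc m₂ → Euc m₁ × Euc m₂)
    (hTG : ∀ w : Euc m₁ × Euc m₂,
      (TG w).1 ∈ proxSet (fun u => ((β * g u : ℝ) : EReal))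
          (w.1 - β • mVec D.transpose w.2) ∧
      (TG w).2 ∈ proxSet (fun u => ((η : ℝ) : EReal) * conjFn (iotaInd d) u)
          ((2 * η) • mVec D (TG w).1 - η • mVec D w.1 + w.2))
    (Winv : Euc m₁ × Euc m₂ → Euc m₁ × Euc m₂)
    (hWinv₁ : ∀ z, Wapp β η D (Winv z) = z) :
    {z : Euc m₁ × Euc m₂ | TG (z - Winv (gradient f z.1, 0)) = z} =
    {z : Euc m₁ × Euc m₂ |
      z.1 ∈ proxSet (fun u => ((β * g u : ℝ) : EReal))
          (z.1 - β • (gradient f z.1 + mVec D.transpose z.2)) ∧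
      z.2 ∈ proxSet (fun u => ((η : ℝ) : EReal) * conjFn (iotaInd d) u)
          (z.2 + η • mVec D z.1)} := by
  ext z
  have hu := hWinv₁ (gradient f z.1, 0)
  obtain ⟨hT₁, hT₂⟩ := hTG (z - Winv (gradient f z.1, 0))
  rw [primal_arg_sub_of_Wapp_eq hβ.ne' hu] at hT₁
  constructor
  · intro hfix
    rw [hfix] at hT₁ hT₂
    rw [dual_arg_sub_of_Wapp_eq hη.ne' hu] at hT₂
    exact ⟨hT₁, hT₂⟩
  · rintro ⟨hz₁, hz₂⟩
    have h₁ := proxSet_coe_subsingleton (hgconv.smul hβ.le) _ hT₁ hz₁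
    rw [h₁, dual_arg_sub_of_Wapp_eq hη.ne' hu] at hT₂
    exact Prod.ext h₁ (proxSet_mul_conjFn_iotaInd_subsingleton d hη _ hT₂ hz₂)

/-- Fix(T_W) = Fix(T_{β,η}), where T_W = T_G ∘ (I − W⁻¹∇r).
Here `TG` is the operator T_G, characterized by its defining implicit fixed-point
property `hTG`; `Winv` is the (two-sided) inverse of `W`; and `r (v, y) = f v`, so
that `∇r z = (∇f z.1, 0)`.  A point `z` is a fixed point of `T_{β,η}` iff
`z.1 = prox_{βg}(z.1 − β(∇f z.1 + Dᵀ z.2))` and `z.2 = prox_{η ι_d*}(z.2 + ηD z.1)`. -/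
theorem stmt3 {m₁ m₂ : ℕ} (D : Matrix (Fin m₂) (Fin m₁) ℝ) (d : Euc m₂)
    (f g : Euc m₁ → ℝ) (L : ℝ)
    (hfdiff : Differentiable ℝ f) (hfconv : ConvexOn ℝ Set.univ f)
    (hflip : ∀ x y : Euc m₁, ‖gradient f x - gradient f y‖ ≤ L * ‖x - y‖)
    (hgconv : ConvexOn ℝ Set.univ g)
    (β η : ℝ) (hβ : 0 < β) (hη : 0 < η)
    (TG : Euc m₁ × Euc m₂ → Euc m₁ × Euc m₂)
    (hTG : ∀ w : Euc m₁ × Euc m₂,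
      (TG w).1 ∈ proxSet (fun u => ((β * g u : ℝ) : EReal))
          (w.1 - β • mVec D.transpose w.2) ∧
      (TG w).2 ∈ proxSet (fun u => ((η : ℝ) : EReal) * conjFn (iotaInd d) u)
          ((2 * η) • mVec D (TG w).1 - η • mVec D w.1 + w.2))
    (Winv : Euc m₁ × Euc m₂ → Euc m₁ × Euc m₂)
    (hWinv₁ : ∀ z, Wapp β η D (Winv z) = z)
    (hWinv₂ : ∀ z, Winv (Wapp β η D z) = z) :
    {z : Euc m₁ × Euc m₂ | TG (z - Winv (gradient f z.1, 0)) = z} =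
    {z : Euc m₁ × Euc m₂ |
      z.1 ∈ proxSet (fun u => ((β * g u : ℝ) : EReal))
          (z.1 - β • (gradient f z.1 + mVec D.transpose z.2)) ∧
      z.2 ∈ proxSet (fun u => ((η : ℝ) : EReal) * conjFn (iotaInd d) u)
          (z.2 + η • mVec D z.1)} :=
  stmt3_general D d f g hgconv β η hβ hη TG hTG Winv hWinv₁
end
end

section
/- Let L > 0 and ξ > 0. If β ∈ (0, 2ξ/L) and η ∈ (0, 2ξ(2ξ − βL)/(4βξ²‖D‖₂² + L(2ξ − βL))), then the minimum eigenvalue of W = [[(1/β)I_{m₁}, −Dᵀ],[−D, (1/η)I_{m₂}]] satisfies λ_min(W) > L/(2ξ); equivalently, W − (L/(2ξ))I_{m₁+m₂} is positive definite. -/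
noncomputable section

open scoped BigOperators

/-- The spectral norm (ℓ²-operator norm) of a matrix. -/
def specNorm {p q : ℕ} (A : Matrix (Fin p) (Fin q) ℝ) : ℝ :=
  ‖LinearMap.toContinuousLinearMap (Matrix.toEuclideanLin A)‖

/-!
Write `c = L/(2ξ)`, `A = 1/β - c`, `B = 1/η - c` and `N = ‖D‖₂`. The hypothesis on `β` says
`A > 0`, and, after clearing denominators, the hypothesis on `η` says exactly `N² < AB`.
For `z = (x, y)`,
`⟨z, Wz⟩ - c‖z‖² = A‖x‖² + B‖y‖² - 2⟨Dx, y⟩ ≥ A‖x‖² + B‖y‖² - 2N‖x‖‖y‖`,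
and the binary quadratic form `A a² - 2N a b + B b²` is positive definite when `A > 0` and
`N² < AB`. An eigenvalue `μ` of `W` with eigenvector `z` satisfies `⟨z, Wz⟩ = μ‖z‖²`, so `μ > c`.
-/

lemma mVec_eq_toEuclideanLin {p q : ℕ} (A : Matrix (Fin p) (Fin q) ℝ) (v : Euc q) :
    mVec A v = Matrix.toEuclideanLin A v := by
  ext i
  simp [mVec, Matrix.toLpLin_apply, Matrix.mulVec, dotProduct]

lemma norm_mVec_le {p q : ℕ} (A : Matrix (Fin p) (Fin q) ℝ) (v : Euc q) :
    ‖mVec A v‖ ≤ specNorm A * ‖v‖ := by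
  rw [mVec_eq_toEuclideanLin]
  exact (LinearMap.toContinuousLinearMap (Matrix.toEuclideanLin A)).le_opNorm v

lemma inner_mVec_transpose {p q : ℕ} (A : Matrix (Fin p) (Fin q) ℝ) (x : Euc q) (y : Euc p) :
    inner ℝ x (mVec A.transpose y) = inner ℝ (mVec A x) y := by
  simp only [mVec, PiLp.inner_apply, RCLike.inner_apply, conj_trivial,
    Matrix.transpose_apply, Finset.mul_sum, Finset.sum_mul]
  rw [Finset.sum_comm]
  exact Finset.sum_congr rfl fun i _ => Finset.sum_congr rfl fun j _ => by ring

lemma norm_sq_add_norm_sq_pos {E F : Type*} [NormedAddCommGroup E] [NormedAddCommGroup F]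
    {z : E × F} (hz : z ≠ 0) : 0 < ‖z.1‖ ^ 2 + ‖z.2‖ ^ 2 := by
  rcases not_and_or.mp fun h => hz (Prod.ext h.1 h.2) with h | h
  · exact add_pos_of_pos_of_nonneg (pow_pos (norm_pos_iff.mpr h) 2) (sq_nonneg _)
  · exact add_pos_of_nonneg_of_pos (sq_nonneg _) (pow_pos (norm_pos_iff.mpr h) 2)

lemma two_mul_mul_lt_of_sq_lt_mul {A B N a b : ℝ} (hA : 0 < A) (hN : N ^ 2 < A * B)
    (hab : 0 < a ^ 2 + b ^ 2) : 2 * N * a * b < A * a ^ 2 + B * b ^ 2 := by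
  -- `A (A a² - 2N a b + B b²) = (A a - N b)² + (AB - N²) b²`
  have hsos : 0 < (A * a - N * b) ^ 2 + (A * B - N ^ 2) * b ^ 2 := by
    rcases eq_or_ne b 0 with rfl | hb
    · have ha : 0 < a ^ 2 := by simpa using hab
      nlinarith [mul_pos (mul_pos hA hA) ha]
    · have := mul_pos (sub_pos.mpr hN) (by positivity : 0 < b ^ 2)
      positivity
  nlinarith

lemma sq_lt_mul_of_lt_div {β η c N : ℝ} (hβ : 0 < β) (hβc : β * c < 1) (hη : 0 < η)
    (hηlt : η < (1 - β * c) / (β * N ^ 2 + c * (1 - β * c))) :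
    N ^ 2 < (1 / β - c) * (1 / η - c) := by
  have hS : 0 < β * N ^ 2 + c * (1 - β * c) :=
    (div_pos_iff_of_pos_left (by linarith)).mp (hη.trans hηlt)
  have h := (lt_div_iff₀ hS).mp hηlt
  rw [div_sub' hβ.ne', div_sub' hη.ne', div_mul_div_comm, lt_div_iff₀ (by positivity)]
  nlinarith

section

variable {m₁ m₂ : ℕ} (β η : ℝ) (D : Matrix (Fin m₂) (Fin m₁) ℝ)

lemma ipW_self (z : Euc m₁ × Euc m₂) :
    ipW β η D z z = 1 / β * ‖z.1‖ ^ 2 + 1 / η * ‖z.2‖ ^ 2 - 2 * inner ℝ (mVec D z.1) z.2 := by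
  simp only [ipW, Wapp, inner_sub_right, inner_add_right, inner_neg_right,
    real_inner_smul_right, real_inner_self_eq_norm_sq, inner_mVec_transpose,
    real_inner_comm z.2 (mVec D z.1)]
  ring

lemma ipW_self_of_eigenvector {μ : ℝ} {z : Euc m₁ × Euc m₂} (hz : Wapp β η D z = μ • z) :
    ipW β η D z z = μ * (‖z.1‖ ^ 2 + ‖z.2‖ ^ 2) := by
  simp only [ipW, hz, Prod.smul_fst, Prod.smul_snd, real_inner_smul_right,
    real_inner_self_eq_norm_sq]
  ring

lemma lt_ipW_self {c : ℝ} (hA : 0 < 1 / β - c)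
    (hN : specNorm D ^ 2 < (1 / β - c) * (1 / η - c)) {z : Euc m₁ × Euc m₂} (hz : z ≠ 0) :
    c * (‖z.1‖ ^ 2 + ‖z.2‖ ^ 2) < ipW β η D z z := by
  have hinner : inner ℝ (mVec D z.1) z.2 ≤ specNorm D * ‖z.1‖ * ‖z.2‖ :=
    calc inner ℝ (mVec D z.1) z.2 ≤ ‖mVec D z.1‖ * ‖z.2‖ := real_inner_le_norm _ _
      _ ≤ specNorm D * ‖z.1‖ * ‖z.2‖ :=
        mul_le_mul_of_nonneg_right (norm_mVec_le D z.1) (norm_nonneg _)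
  have := two_mul_mul_lt_of_sq_lt_mul hA hN (norm_sq_add_norm_sq_pos hz)
  rw [ipW_self]
  linarith

lemma lt_of_eigenvalue {c : ℝ}
    (hc : ∀ z : Euc m₁ × Euc m₂, z ≠ 0 → c * (‖z.1‖ ^ 2 + ‖z.2‖ ^ 2) < ipW β η D z z)
    {μ : ℝ} (hμ : ∃ z : Euc m₁ × Euc m₂, z ≠ 0 ∧ Wapp β η D z = μ • z) : c < μ := by
  obtain ⟨z, hz, hWz⟩ := hμ
  have := hc z hz
  rw [ipW_self_of_eigenvector β η D hWz] at this
  exact lt_of_mul_lt_mul_right this (norm_sq_add_norm_sq_pos hz).le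

end

theorem stmt5_general {m₁ m₂ : ℕ} (D : Matrix (Fin m₂) (Fin m₁) ℝ)
    (L ξ : ℝ)
    (β η : ℝ)
    (hβ : β ∈ Set.Ioo 0 (2 * ξ / L))
    (hη : η ∈ Set.Ioo 0
      (2 * ξ * (2 * ξ - β * L) / (4 * β * ξ ^ 2 * specNorm D ^ 2 + L * (2 * ξ - β * L)))) :
    (∀ lammin : ℝ,
      IsLeast {μ : ℝ | ∃ z : Euc m₁ × Euc m₂, z ≠ 0 ∧ Wapp β η D z = μ • z} lammin →
      L / (2 * ξ) < lammin) ∧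
    (∀ z : Euc m₁ × Euc m₂, z ≠ 0 →
      L / (2 * ξ) * (‖z.1‖ ^ 2 + ‖z.2‖ ^ 2) < ipW β η D z z) := by
  obtain ⟨hβ0, hβlt⟩ := hβ
  obtain ⟨hη0, hηlt⟩ := hη
  have hpos : 0 < 2 * ξ / L := hβ0.trans hβlt
  have hξ : ξ ≠ 0 := by rintro rfl; simp at hpos
  set c := L / (2 * ξ) with hc
  have hβc : β * c < 1 := by
    rw [hc, ← inv_div, mul_inv_lt_iff₀ hpos, one_mul]; exact hβlt
  -- divide numerator and denominator of the bound by `4ξ²`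
  have hbound : 2 * ξ * (2 * ξ - β * L) / (4 * β * ξ ^ 2 * specNorm D ^ 2 + L * (2 * ξ - β * L))
      = (1 - β * c) / (β * specNorm D ^ 2 + c * (1 - β * c)) := by
    rw [hc]
    field_simp
    ring
  rw [hbound] at hηlt
  have hA : 0 < 1 / β - c := by
    rw [sub_pos, lt_div_iff₀ hβ0, mul_comm]; exact hβc
  have hN := sq_lt_mul_of_lt_div hβ0 hβc hη0 hηlt
  have main := fun z (hz : z ≠ 0) => lt_ipW_self β η D hA hN hz
  exact ⟨fun _ hmin => lt_of_eigenvalue β η D main hmin.1, main⟩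

/-- if β ∈ (0, 2ξ/L) and
η ∈ (0, 2ξ(2ξ − βL)/(4βξ²‖D‖₂² + L(2ξ − βL))), then λ_min(W) > L/(2ξ);
equivalently, W − (L/(2ξ))I is positive definite, i.e.
⟨z, Wz⟩ > (L/(2ξ))‖z‖² for all z ≠ 0. -/
theorem stmt5 {m₁ m₂ : ℕ} (D : Matrix (Fin m₂) (Fin m₁) ℝ)
    (L ξ : ℝ) (hL : 0 < L) (hξ : 0 < ξ)
    (β η : ℝ)
    (hβ : β ∈ Set.Ioo 0 (2 * ξ / L))
    (hη : η ∈ Set.Ioo 0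
      (2 * ξ * (2 * ξ - β * L) / (4 * β * ξ ^ 2 * specNorm D ^ 2 + L * (2 * ξ - β * L)))) :
    (∀ lammin : ℝ,
      IsLeast {μ : ℝ | ∃ z : Euc m₁ × Euc m₂, z ≠ 0 ∧ Wapp β η D z = μ • z} lammin →
      L / (2 * ξ) < lammin) ∧
    (∀ z : Euc m₁ × Euc m₂, z ≠ 0 →
      L / (2 * ξ) * (‖z.1‖ ^ 2 + ‖z.2‖ ^ 2) < ipW β η D z z) :=
  stmt5_general D L ξ β η hβ hη
end
end
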